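/- If s₁,…,s_n,s are exchangeable and almost surely distinct, then the rank of s among the n+1 values is uniformly distributed on {1,…,n+1}; consequently P(s ≤ s_(k)) = k/(n+1) for each order statistic s_(k) of s₁,…,s_n. -/

import Mathlib

/-!
Swapping a coordinate with the last one preserves the joint law, so every coordinate's rank has
the same distribution. Almost surely the values are distinct, and then each rank `k` is attained
by exactly one coordinate; hence these `n + 1` equal probabilities sum to one. A value that is not
among `s₁, …, sₙ` lies below `s₍ₖ₎` exactly when fewer than `k` of them lie below it, that is, when
its rank among all `n + 1` values is at most `k`.
-/

open MeasureTheory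

/-- The `k`-th smallest value (1-indexed) among `w 0, …, w (n-1)`. -/
noncomputable def kthSmallest {n : ℕ} (w : Fin n → ℝ) (k : ℕ) : ℝ :=
  ((List.ofFn w).mergeSort (· ≤ ·)).getD (k - 1) 0

open Finset Function

namespace Tuple

variable {ι κ α : Type*} [Fintype ι] [LinearOrder α]

def rank (w : ι → α) (i : ι) : ℕ := #{j | w j ≤ w i}

variable {w : ι → α} {i j : ι}

theorem one_le_rank (w : ι → α) (i : ι) : 1 ≤ rank w i := card_pos.2 ⟨i, by simp⟩

theorem rank_le_card (w : ι → α) (i : ι) : rank w i ≤ Fintype.card ι := card_le_univ _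

theorem rank_lt_rank (h : w i < w j) : rank w i < rank w j :=
  card_lt_card <| (ssubset_iff_of_subset <| monotone_filter_right _ fun _ _ (ha : _ ≤ _) =>
    ha.trans h.le).2 ⟨j, by simp, by simpa using h⟩

theorem eq_of_rank_eq (h : rank w i = rank w j) : w i = w j := by
  by_contra hne
  rcases lt_or_gt_of_ne hne with hlt | hlt
  · exact (rank_lt_rank hlt).ne h
  · exact (rank_lt_rank hlt).ne' h

theorem exists_rank_eq (hw : Injective w) {k : ℕ} (hk₁ : 1 ≤ k) (hk : k ≤ Fintype.card ι) :
    ∃ i, rank w i = k := by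
  have himage : univ.image (rank w) = Icc 1 (Fintype.card ι) := by
    refine eq_of_subset_of_card_le (fun _ hk => ?_) ?_
    · obtain ⟨i, -, rfl⟩ := mem_image.1 hk
      exact mem_Icc.2 ⟨one_le_rank w i, rank_le_card w i⟩
    · rw [card_image_of_injective _ fun _ _ h => hw (eq_of_rank_eq h)]
      simp
  obtain ⟨i, -, hi⟩ := mem_image.1 (himage ▸ mem_Icc.2 ⟨hk₁, hk⟩)
  exact ⟨i, hi⟩

theorem rank_comp_equiv [Fintype κ] (w : ι → α) (e : κ ≃ ι) (i : κ) :
    rank (w ∘ e) i = rank w (e i) := by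
  simp only [rank, card_filter]
  exact e.sum_comp fun j => if w j ≤ w (e i) then 1 else 0

end Tuple

open Tuple

section OrderStatistic

theorem card_filter_univ_eq_countP_ofFn {α : Type*} {m : ℕ} (v : Fin m → α) (p : α → Prop)
    [DecidablePred p] : #{i | p (v i)} = Multiset.countP p ↑(List.ofFn v) := by
  rw [← Fin.univ_val_map, Multiset.countP_map]
  rfl

variable {α : Type*} [LinearOrder α]

theorem Monotone.le_apply_iff_card_lt {m : ℕ} {f : Fin m → α} (hf : Monotone f) (t : α)
    (i : Fin m) : t ≤ f i ↔ #{j | f j < t} ≤ i := by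
  constructor
  · intro h
    calc #{j | f j < t} ≤ #(Iio i) := card_le_card fun j hj => by
          simp only [mem_filter, mem_univ, true_and] at hj
          exact mem_Iio.2 <| lt_of_not_ge fun hij => (h.trans (hf hij)).not_gt hj
      _ = i := Fin.card_Iio i
  · intro h
    by_contra! hlt
    have : #(Iic i) ≤ #{j | f j < t} := card_le_card fun j hj => by
      simpa using (hf (mem_Iic.1 hj)).trans_lt hlt
    rw [Fin.card_Iic] at this
    omega

theorem le_kthSmallest_iff {n : ℕ} (v : Fin n → ℝ) (t : ℝ) {k : ℕ} (hk₁ : 1 ≤ k) (hk : k ≤ n) :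
    t ≤ kthSmallest v k ↔ #{i | v i < t} < k := by
  set L := (List.ofFn v).mergeSort (· ≤ ·)
  have hlen : k - 1 < L.length := by simp [L]; omega
  have hcount : #{i | v i < t} = #{j | L.get j < t} := by
    rw [card_filter_univ_eq_countP_ofFn v (· < t), card_filter_univ_eq_countP_ofFn L.get (· < t),
      List.ofFn_get, Multiset.coe_eq_coe.2 (List.mergeSort_perm _ _)]
  rw [kthSmallest, List.getD_eq_getElem _ _ hlen, hcount]
  exact (List.sortedLE_mergeSort.monotone_get.le_apply_iff_card_lt t ⟨k - 1, hlen⟩).trans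
    (Nat.le_sub_one_iff_lt hk₁)

theorem le_kthSmallest_init_iff_rank_last_le {n : ℕ} {w : Fin (n + 1) → ℝ} (hw : Injective w)
    {k : ℕ} (hk₁ : 1 ≤ k) (hk : k ≤ n) :
    w (Fin.last n) ≤ kthSmallest (fun i : Fin n => w i.castSucc) k ↔ rank w (Fin.last n) ≤ k := by
  have hrank : rank w (Fin.last n) = #{i : Fin n | w i.castSucc < w (Fin.last n)} + 1 := by
    have hlt (i : Fin n) : w i.castSucc ≤ w (Fin.last n) ↔ w i.castSucc < w (Fin.last n) :=
      (hw.ne (Fin.castSucc_ne_last i)).le_iff_lt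
    rw [rank, card_filter, card_filter, Fin.sum_univ_castSucc]
    simp only [hlt, le_refl, if_true]
  rw [le_kthSmallest_iff _ _ hk₁ hk, hrank]
  omega

end OrderStatistic

section Exchangeable

open scoped ENNReal

variable {Ω ι : Type*} [MeasurableSpace Ω]

def Exchangeable {α : Type*} [MeasurableSpace α] (μ : Measure Ω) (S : Ω → ι → α) : Prop :=
  ∀ σ : Equiv.Perm ι, μ.map (fun ω i => S ω (σ i)) = μ.map S

variable {μ : Measure Ω} [Fintype ι] {S : Ω → ι → ℝ}

theorem measurable_rank (i : ι) : Measurable fun w : ι → ℝ => rank w i := by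
  simp only [rank, card_filter]
  exact Finset.measurable_sum _ fun j _ => Measurable.ite
    (measurableSet_le (measurable_pi_apply j) (measurable_pi_apply i)) measurable_const
    measurable_const

theorem measurableSet_rank_eq (hS : Measurable S) (i : ι) (k : ℕ) :
    MeasurableSet {ω | rank (S ω) i = k} :=
  (measurable_rank i).comp hS (measurableSet_singleton k)

theorem Exchangeable.measure_rank_eq [DecidableEq ι] (hexch : Exchangeable μ S) (hS : Measurable S)
    (i j : ι) (k : ℕ) : μ {ω | rank (S ω) i = k} = μ {ω | rank (S ω) j = k} := by
  let σ := Equiv.swap i j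
  have hpermute : Measurable fun ω i => S ω (σ i) :=
    measurable_pi_lambda _ fun l => measurable_pi_apply (σ l) |>.comp hS
  have hset : {ω | rank (S ω) i = k} = (fun ω i => S ω (σ i)) ⁻¹' {w | rank w j = k} := by
    ext ω
    change _ ↔ rank (S ω ∘ σ) j = k
    simp [rank_comp_equiv, σ]
  have hmeas : MeasurableSet {w : ι → ℝ | rank w j = k} :=
    measurable_rank j (measurableSet_singleton k)
  rw [hset, ← Measure.map_apply hpermute hmeas, hexch σ, Measure.map_apply hS hmeas]
  rfl

theorem ae_injective (hdistinct : ∀ i j, i ≠ j → μ {ω | S ω i = S ω j} = 0) :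
    ∀ᵐ ω ∂μ, Injective (S ω) := by
  have hpair (i j : ι) : ∀ᵐ ω ∂μ, S ω i = S ω j → i = j := by
    by_cases hij : i = j
    · exact .of_forall fun _ _ => hij
    · filter_upwards [measure_eq_zero_iff_ae_notMem.1 (hdistinct i j hij)] with ω hω h
      exact absurd h hω
  filter_upwards [ae_all_iff.2 fun i => ae_all_iff.2 (hpair i)] with ω hω i j
  exact hω i j

theorem sum_measure_rank_eq_one [IsProbabilityMeasure μ] (hS : Measurable S)
    (hdistinct : ∀ i j, i ≠ j → μ {ω | S ω i = S ω j} = 0) {k : ℕ} (hk₁ : 1 ≤ k)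
    (hk : k ≤ Fintype.card ι) : ∑ i, μ {ω | rank (S ω) i = k} = 1 := by
  have hdisj :
      ((univ : Finset ι) : Set ι).Pairwise (AEDisjoint μ on fun i => {ω | rank (S ω) i = k}) :=
    fun i _ j _ hij => measure_mono_null (fun ω hω => eq_of_rank_eq (hω.1.trans hω.2.symm))
      (hdistinct i j hij)
  have hcover : (⋃ i ∈ univ, {ω | rank (S ω) i = k}) =ᵐ[μ] (Set.univ : Set Ω) :=
    Filter.eventuallyEq_set.2 <| (ae_injective hdistinct).mono fun ω hω => by
      simpa using exists_rank_eq hω hk₁ hk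
  rw [← measure_biUnion_finset₀ hdisj fun i _ => (measurableSet_rank_eq hS i k).nullMeasurableSet,
    measure_congr hcover, measure_univ]

theorem Exchangeable.measure_rank_eq_inv_card [IsProbabilityMeasure μ]
    (hexch : Exchangeable μ S) (hS : Measurable S)
    (hdistinct : ∀ i j, i ≠ j → μ {ω | S ω i = S ω j} = 0) (i : ι) {k : ℕ} (hk₁ : 1 ≤ k)
    (hk : k ≤ Fintype.card ι) : μ {ω | rank (S ω) i = k} = (Fintype.card ι : ℝ≥0∞)⁻¹ := by
  classical
  have hsum := sum_measure_rank_eq_one hS hdistinct hk₁ hk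
  simp only [hexch.measure_rank_eq hS _ i k, sum_const, card_univ, nsmul_eq_mul] at hsum
  exact ENNReal.eq_inv_of_mul_eq_one_left ((mul_comm _ _).trans hsum)

theorem Exchangeable.measure_rank_le [IsProbabilityMeasure μ]
    (hexch : Exchangeable μ S) (hS : Measurable S)
    (hdistinct : ∀ i j, i ≠ j → μ {ω | S ω i = S ω j} = 0) (i : ι) {k : ℕ}
    (hk : k ≤ Fintype.card ι) : μ {ω | rank (S ω) i ≤ k} = k / Fintype.card ι := by
  have hset : {ω | rank (S ω) i ≤ k} = (fun ω => rank (S ω) i) ⁻¹' ↑(Icc 1 k) := by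
    ext ω
    simp [one_le_rank]
  calc μ {ω | rank (S ω) i ≤ k} = ∑ j ∈ Icc 1 k, μ {ω | rank (S ω) i = j} := by
        rw [hset, ← sum_measure_preimage_singleton _ fun j _ => measurableSet_rank_eq hS i j]
        rfl
    _ = ∑ j ∈ Icc 1 k, (Fintype.card ι : ℝ≥0∞)⁻¹ := sum_congr rfl fun j hj =>
        hexch.measure_rank_eq_inv_card hS hdistinct i (mem_Icc.1 hj).1 ((mem_Icc.1 hj).2.trans hk)
    _ = k / Fintype.card ι := by simp [div_eq_mul_inv]

end Exchangeable

/-- If `S 0, …, S (n-1), S n` are exchangeable and almost surely pairwise distinct,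
then the rank of the test score `S n` among all `n+1` values is uniform on
`{1,…,n+1}`, and `P(S n ≤ s₍ₖ₎) = k/(n+1)` for each order statistic `s₍ₖ₎` of the
first `n` scores. -/
theorem exchangeable_rank_uniform
    {Ω : Type*} [MeasurableSpace Ω] (μ : Measure Ω) [IsProbabilityMeasure μ]
    (n : ℕ) (S : Ω → Fin (n + 1) → ℝ) (hS : Measurable S)
    (hexch : ∀ σ : Equiv.Perm (Fin (n + 1)),
      Measure.map (fun ω i => S ω (σ i)) μ = Measure.map S μ)
    (hdistinct : ∀ i j : Fin (n + 1), i ≠ j → μ {ω | S ω i = S ω j} = 0) :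
    (∀ k : ℕ, 1 ≤ k → k ≤ n + 1 →
      μ {ω | (Finset.univ.filter
          (fun j : Fin (n + 1) => S ω j ≤ S ω (Fin.last n))).card = k}
        = 1 / (n + 1)) ∧
    (∀ k : ℕ, 1 ≤ k → k ≤ n →
      μ {ω | S ω (Fin.last n) ≤ kthSmallest (fun i : Fin n => S ω i.castSucc) k}
        = k / (n + 1)) := by
  have hexch : Exchangeable μ S := hexch
  refine ⟨fun k hk₁ hk => ?_, fun k hk₁ hk => ?_⟩
  · simpa [rank] using
      hexch.measure_rank_eq_inv_card hS hdistinct (Fin.last n) hk₁ (by simpa using hk)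
  · calc μ {ω | S ω (Fin.last n) ≤ kthSmallest (fun i : Fin n => S ω i.castSucc) k}
        = μ {ω | rank (S ω) (Fin.last n) ≤ k} :=
          measure_congr <| Filter.eventuallyEq_set.2 <| (ae_injective hdistinct).mono
            fun ω hω => le_kthSmallest_init_iff_rank_last_le hω hk₁ hk
      _ = k / (n + 1) := by
          simpa using hexch.measure_rank_le hS hdistinct (Fin.last n) (k := k) (by simp; omega)
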